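/- arXiv:1111.4648 — 5 statements merged into one kernel-verified Lean document; each statement's English description precedes it below -/
import Mathlib

section
/- There exists an absolute constant C such that for all integers a, b and every positive integer c, the generalized quadratic Gauss sum satisfies |G(a,b,c)| ≤ C · gcd(a,c)^{1/2} · c^{1/2}. -/
/-- The generalized quadratic Gauss sum `G(a,b,c) = ∑_{n=0}^{c-1} e((a n² + b n)/c)`,
where `e(x) = exp(2πix)`. -/
noncomputable def gaussSumG (a b : ℤ) (c : ℕ) : ℂ :=
  ∑ n ∈ Finset.range c,
    Complex.exp (2 * Real.pi * Complex.I * (((a : ℂ) * n ^ 2 + (b : ℂ) * n) / (c : ℂ)))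

/-!
Weyl differencing: substituting `x = y + h` in `|G|² = ∑_{x,y} e((f x - f y)/c)`, where
`f x = a x² + b x`, gives `f (y + h) - f y = f h + 2ahy`, so
`|G|² = ∑_h e(f h / c) ∑_y e(2ahy/c)`.
The inner sum is `c` when `c ∣ 2ah` and `0` otherwise, and there are `gcd(2a, c) ≤ 2 gcd(a, c)`
residues `h` with `c ∣ 2ah`. Hence `|G|² ≤ 2 gcd(a, c) c`.
-/

open Finset ComplexConjugate

namespace AddChar

variable {R : Type*} [CommRing R] [Fintype R] [DecidableEq R]

lemma sum_quadratic_mul_conj (ψ : AddChar R ℂ) (hψ : ψ.IsPrimitive) (a b : R) :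
    (∑ x, ψ (a * x ^ 2 + b * x)) * conj (∑ x, ψ (a * x ^ 2 + b * x)) =
      Fintype.card R * ∑ h with 2 * a * h = 0, ψ (a * h ^ 2 + b * h) := by
  have hdiff (h y : R) : a * (h + y) ^ 2 + b * (h + y) + -(a * y ^ 2 + b * y) =
      a * h ^ 2 + b * h + y * (2 * a * h) := by ring
  calc (∑ x, ψ (a * x ^ 2 + b * x)) * conj (∑ x, ψ (a * x ^ 2 + b * x))
      = ∑ y, ∑ x, ψ (a * x ^ 2 + b * x + -(a * y ^ 2 + b * y)) := by
        simp only [map_sum, sum_mul_sum, ← map_neg_eq_conj, ← map_add_eq_mul]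
        exact sum_comm
    _ = ∑ y, ∑ h, ψ (a * h ^ 2 + b * h) * ψ (y * (2 * a * h)) := by
        refine sum_congr rfl fun y _ => ?_
        rw [← Equiv.sum_comp (Equiv.addRight y)]
        simp only [Equiv.coe_addRight, hdiff, map_add_eq_mul]
    _ = ∑ h, ψ (a * h ^ 2 + b * h) * ∑ y, ψ (y * (2 * a * h)) := by
        rw [sum_comm]
        simp only [mul_sum]
    _ = Fintype.card R * ∑ h with 2 * a * h = 0, ψ (a * h ^ 2 + b * h) := by
        simp only [sum_mulShift _ hψ, mul_ite, mul_zero, sum_filter, mul_sum]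
        exact sum_congr rfl fun h _ => by split_ifs <;> ring

lemma sq_norm_sum_quadratic_le (ψ : AddChar R ℂ) (hψ : ψ.IsPrimitive) (a b : R) :
    ‖∑ x, ψ (a * x ^ 2 + b * x)‖ ^ 2 ≤ Fintype.card R * #{h | 2 * a * h = 0} := by
  calc ‖∑ x, ψ (a * x ^ 2 + b * x)‖ ^ 2
      = ‖(∑ x, ψ (a * x ^ 2 + b * x)) * conj (∑ x, ψ (a * x ^ 2 + b * x))‖ := by
        rw [norm_mul, Complex.norm_conj, sq]
    _ ≤ Fintype.card R * ∑ h with 2 * a * h = 0, ‖ψ (a * h ^ 2 + b * h)‖ := by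
        rw [sum_quadratic_mul_conj ψ hψ, norm_mul, Complex.norm_natCast]
        gcongr
        exact norm_sum_le _ _
    _ = Fintype.card R * #{h | 2 * a * h = 0} := by simp [norm_apply]

end AddChar

namespace ZMod

variable (c : ℕ) [NeZero c]

lemma sum_range_natCast {M : Type*} [AddCommMonoid M] (f : ZMod c → M) :
    ∑ n ∈ range c, f n = ∑ x, f x :=
  sum_nbij' (fun n => n) val (by simp) (fun x _ => by simp [val_lt])
    (fun n hn => val_cast_of_lt (mem_range.mp hn)) (fun x _ => natCast_zmod_val x)
    (fun _ _ => rfl)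

lemma card_filter_intCast_mul_eq_zero (k : ℤ) :
    #{h : ZMod c | (k : ZMod c) * h = 0} = Int.gcd k c := by
  have hker := IsAddCyclic.card_nsmulAddMonoidHom_ker (ZMod c) k.natAbs
  rw [Nat.card_zmod] at hker
  rw [Int.gcd_comm, Int.gcd, Int.natAbs_natCast, ← hker, ← Fintype.card_subtype,
    ← Nat.card_eq_fintype_card]
  refine Nat.card_congr (Equiv.subtypeEquivRight fun h => ?_)
  rw [AddMonoidHom.mem_ker, nsmulAddMonoidHom_apply, nsmul_eq_mul]
  obtain ⟨n, rfl | rfl⟩ := Int.eq_nat_or_neg k <;> simp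

end ZMod

lemma Int.gcd_two_mul_le (a : ℤ) {c : ℤ} (hc : c ≠ 0) :
    Int.gcd (2 * a) c ≤ 2 * Int.gcd a c := by
  have hpos : 0 < Int.gcd a c := Int.gcd_pos_of_ne_zero_right a hc
  refine Nat.le_of_dvd (by positivity) ?_
  have h := Int.gcd_mul_left 2 a c
  rw [show (2 : ℤ).natAbs = 2 from rfl] at h
  rw [← h]
  exact Int.gcd_dvd_gcd_of_dvd_right _ (dvd_mul_left c 2)

lemma gaussSumG_eq_sum_stdAddChar (a b : ℤ) (c : ℕ) [NeZero c] :
    gaussSumG a b c =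
      ∑ x : ZMod c, ZMod.stdAddChar ((a : ZMod c) * x ^ 2 + (b : ZMod c) * x) := by
  rw [gaussSumG, ← ZMod.sum_range_natCast]
  refine sum_congr rfl fun n _ => ?_
  have hn := ZMod.stdAddChar_coe (N := c) (a * (n : ℤ) ^ 2 + b * n)
  push_cast at hn
  rw [hn, mul_div_assoc]

/-- There exists an absolute constant `C` such that for all integers `a, b` and every
positive integer `c`, `|G(a,b,c)| ≤ C · gcd(a,c)^{1/2} · c^{1/2}`. -/
theorem gauss_sum_bound :
    ∃ C : ℝ, ∀ (a b : ℤ) (c : ℕ), 0 < c →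
      ‖gaussSumG a b c‖ ≤ C * Real.sqrt (Int.gcd a c) * Real.sqrt c := by
  refine ⟨√2, fun a b c hc => ?_⟩
  have : NeZero c := ⟨hc.ne'⟩
  have hsq : ‖gaussSumG a b c‖ ^ 2 ≤ 2 * Int.gcd a c * c := by
    calc ‖gaussSumG a b c‖ ^ 2 ≤ c * Int.gcd (2 * a) c := by
          have hweyl := AddChar.sq_norm_sum_quadratic_le _ (ZMod.isPrimitive_stdAddChar c)
            (a : ZMod c) b
          rwa [ZMod.card, ← Int.cast_ofNat, ← Int.cast_mul,
            ZMod.card_filter_intCast_mul_eq_zero, ← gaussSumG_eq_sum_stdAddChar] at hweyl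
      _ ≤ c * (2 * Int.gcd a c : ℕ) := by
          gcongr
          exact Int.gcd_two_mul_le a (by exact_mod_cast hc.ne')
      _ = 2 * Int.gcd a c * c := by push_cast; ring
  rw [← Real.sqrt_mul (by norm_num), ← Real.sqrt_mul (by positivity)]
  exact Real.le_sqrt_of_sq_le hsq
end

section
/- Let a, b be integers and c a positive integer, and set d = gcd(a,c). If d divides b, then G(a,b,c) = d · G(a/d, b/d, c/d). -/
/-!
Write `a = d a'`, `b = d b'`, `c = d c'`. The summand `e((a n² + b n)/c) = e((a' n² + b' n)/c')`
has period `c'` in `n`, so the `d c'` terms of `G(a,b,c)` run `d` times through those of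
`G(a',b',c')`.
-/

theorem Function.Periodic.sum_range_mul {M : Type*} [AddCommMonoid M] {f : ℕ → M} {c : ℕ}
    (hf : Function.Periodic f c) (d : ℕ) :
    ∑ n ∈ Finset.range (d * c), f n = d • ∑ n ∈ Finset.range c, f n := by
  induction d with
  | zero => simp
  | succ d ih =>
    rw [Nat.succ_mul, Finset.sum_range_add, ih, succ_nsmul]
    congr 1
    exact Finset.sum_congr rfl fun n _ => by rw [add_comm]; exact hf.nat_mul d n

noncomputable def gaussTerm (a b : ℤ) (c n : ℕ) : ℂ :=
  Complex.exp (2 * Real.pi * Complex.I * (((a : ℂ) * n ^ 2 + (b : ℂ) * n) / (c : ℂ)))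

theorem gaussSumG_eq_sum_gaussTerm (a b : ℤ) (c : ℕ) :
    gaussSumG a b c = ∑ n ∈ Finset.range c, gaussTerm a b c n :=
  rfl

theorem gaussTerm_periodic (a b : ℤ) (c : ℕ) : Function.Periodic (gaussTerm a b c) c := by
  intro n
  rcases eq_or_ne c 0 with rfl | hc
  · rw [add_zero]
  have hcC : (c : ℂ) ≠ 0 := Nat.cast_ne_zero.mpr hc
  have shift : 2 * Real.pi * Complex.I * (((a : ℂ) * (n + c : ℕ) ^ 2 + (b : ℂ) * (n + c : ℕ)) / c)
      = 2 * Real.pi * Complex.I * (((a : ℂ) * n ^ 2 + (b : ℂ) * n) / c)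
        + ((2 * a * n + a * c + b : ℤ) : ℂ) * (2 * Real.pi * Complex.I) := by
    push_cast
    field_simp
    ring
  rw [gaussTerm, gaussTerm, shift, Complex.exp_add, Complex.exp_int_mul_two_pi_mul_I, mul_one]

theorem gaussTerm_mul (a b : ℤ) {d : ℕ} (hd : d ≠ 0) (c : ℕ) :
    gaussTerm (d * a) (d * b) (d * c) = gaussTerm a b c := by
  funext n
  have hdC : (d : ℂ) ≠ 0 := Nat.cast_ne_zero.mpr hd
  simp only [gaussTerm]
  have cancel : ((d * a : ℤ) * (n : ℂ) ^ 2 + (d * b : ℤ) * n) / (d * c : ℕ)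
      = ((a : ℂ) * n ^ 2 + (b : ℂ) * n) / c := by
    push_cast
    rw [mul_assoc, mul_assoc (d : ℂ), ← mul_add, mul_div_mul_left _ _ hdC]
  rw [cancel]

theorem gaussSumG_mul (a b : ℤ) (d c : ℕ) :
    gaussSumG (d * a) (d * b) (d * c) = d * gaussSumG a b c := by
  rcases eq_or_ne d 0 with rfl | hd
  · simp [gaussSumG]
  rw [gaussSumG_eq_sum_gaussTerm, gaussTerm_mul a b hd, (gaussTerm_periodic a b c).sum_range_mul,
    nsmul_eq_mul, gaussSumG_eq_sum_gaussTerm]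

theorem gauss_sum_reduction_general (a b : ℤ) (c : ℕ)
    (h : ((Int.gcd a c : ℤ) ∣ b)) :
    gaussSumG a b c =
      (Int.gcd a c : ℂ) *
        gaussSumG (a / (Int.gcd a c : ℤ)) (b / (Int.gcd a c : ℤ)) (c / Int.gcd a c) := by
  set d := Int.gcd a c
  have ha : (d : ℤ) * (a / d) = a := Int.mul_ediv_cancel' (Int.gcd_dvd_left a c)
  have hb : (d : ℤ) * (b / d) = b := Int.mul_ediv_cancel' h
  have hc : d * (c / d) = c := Nat.mul_div_cancel' (Int.natCast_dvd_natCast.mp (Int.gcd_dvd_right a c))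
  rw [← gaussSumG_mul, ha, hb, hc]

/-- If `d = gcd(a,c)` divides `b`, then `G(a,b,c) = d · G(a/d, b/d, c/d)`. -/
theorem gauss_sum_reduction (a b : ℤ) (c : ℕ) (hc : 0 < c)
    (h : ((Int.gcd a c : ℤ) ∣ b)) :
    gaussSumG a b c =
      (Int.gcd a c : ℂ) *
        gaussSumG (a / (Int.gcd a c : ℤ)) (b / (Int.gcd a c : ℤ)) (c / Int.gcd a c) :=
  gauss_sum_reduction_general a b c h
end

section
/- For every ε > 0 there exists a constant C(ε) such that for all positive integers N, s and every real number τ > 0, ∑_{c ≥ 1, Nc ≤ τ/s} gcd(s, Nc)^{1/2} (Nc)^{1/2} ≤ C(ε) · N^{−1/2+ε} · (τ/s)^{3/2} · s^{ε}, where the sum ranges over all positive integers c with Nc ≤ τ/s and gcd denotes the greatest common divisor. -/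
/-!
Put `X = τ / s`. Since `gcd(s, Nc) ∣ N gcd(s, c)` and `Nc ≤ X`, each term is at most
`√N √X gcd(s, c)`, and only `c ≤ K = ⌊X / N⌋` occur. Writing
`gcd(s, c) = ∑_{d ∣ gcd(s, c)} φ(d)` and swapping the sums gives
`∑_{c ≤ K} gcd(s, c) = ∑_{d ∣ s} φ(d) ⌊K / d⌋ ≤ τ(s) K`. Hence the sum is at most
`τ(s) N^{-1/2} X^{3/2}`, and the divisor bound `τ(s) ≪_ε s^ε` finishes the proof.
The divisor bound is proved prime by prime: `a + 1 ≤ (p^a)^ε` as soon as `p^ε ≥ 2`, and the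
finitely many primes `p < 2^{1/ε}` each cost at most a constant factor.
-/

open Finset Real

section DivisorBound

variable {ε : ℝ}

theorem add_one_le_mul_rpow_pow (hε : 0 < ε) {x : ℝ} (hx : 2 ≤ x) (a : ℕ) :
    (a + 1 : ℝ) ≤ (1 + (ε * log 2)⁻¹) * (x ^ a) ^ ε := by
  set L := ε * log 2 with hLdef
  have hL : 0 < L := mul_pos hε (log_pos one_lt_two)
  have hexp : 1 + a * L ≤ (x ^ a) ^ ε := calc
    1 + a * L ≤ exp (a * L) := by linarith [add_one_le_exp (a * L)]
    _ = (2 ^ a) ^ ε := by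
      rw [← rpow_natCast_mul zero_le_two, rpow_def_of_pos two_pos, hLdef]
      ring_nf
    _ ≤ (x ^ a) ^ ε := by gcongr
  calc (a + 1 : ℝ) ≤ (1 + L⁻¹) * (1 + a * L) := by
        have : (1 + L⁻¹) * (1 + a * L) = a + 1 + (a * L + L⁻¹) := by field_simp; ring
        rw [this]
        linarith [inv_pos.mpr hL, mul_nonneg a.cast_nonneg hL.le]
    _ ≤ (1 + L⁻¹) * (x ^ a) ^ ε := by gcongr

theorem add_one_le_rpow_pow (hε : 0 < ε) {x : ℝ} (hx : 2 ^ ε⁻¹ ≤ x) (a : ℕ) :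
    (a + 1 : ℝ) ≤ (x ^ a) ^ ε := by
  have hx₀ : 0 ≤ x := (rpow_nonneg zero_le_two _).trans hx
  have h2x : 2 ≤ x ^ ε := calc
    (2 : ℝ) = (2 ^ ε⁻¹) ^ ε := by
      rw [← rpow_mul zero_le_two, inv_mul_cancel₀ hε.ne', rpow_one]
    _ ≤ x ^ ε := by gcongr
  calc (a + 1 : ℝ) ≤ 2 ^ a := by exact_mod_cast Nat.lt_two_pow_self
    _ ≤ (x ^ ε) ^ a := by gcongr
    _ = (x ^ a) ^ ε := by rw [← rpow_mul_natCast hx₀, ← rpow_natCast_mul hx₀, mul_comm]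

theorem exists_card_divisors_le_mul_rpow (hε : 0 < ε) :
    ∃ C : ℝ, ∀ n : ℕ, n ≠ 0 → (#n.divisors : ℝ) ≤ C * (n : ℝ) ^ ε := by
  set B := 1 + (ε * log 2)⁻¹
  have hB : 1 ≤ B := le_add_of_nonneg_right (inv_nonneg.mpr (mul_pos hε (log_pos one_lt_two)).le)
  set T : ℝ := 2 ^ ε⁻¹
  refine ⟨B ^ ⌈T⌉₊, fun n hn => ?_⟩
  have hfactor : ∀ p ∈ n.primeFactors, (n.factorization p + 1 : ℝ) ≤
      (if (p : ℝ) < T then B else 1) * ((p : ℝ) ^ n.factorization p) ^ ε := by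
    intro p hp
    split_ifs with hpT
    · exact add_one_le_mul_rpow_pow hε (mod_cast (Nat.prime_of_mem_primeFactors hp).two_le) _
    · rw [one_mul]
      exact add_one_le_rpow_pow hε (not_lt.mp hpT) _
  have hsmall : ∏ p ∈ n.primeFactors, (if (p : ℝ) < T then B else 1) ≤ B ^ ⌈T⌉₊ := by
    rw [prod_ite, prod_const, prod_const_one, mul_one]
    refine pow_le_pow_right₀ hB ((card_le_card fun p hp => ?_).trans (card_range _).le)
    rw [mem_range, Nat.lt_ceil]
    exact (mem_filter.mp hp).2
  have hprod : ∏ p ∈ n.primeFactors, ((p : ℝ) ^ n.factorization p) ^ ε = (n : ℝ) ^ ε := by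
    rw [finsetProd_rpow _ _ fun p _ => by positivity]
    congr 1
    exact_mod_cast Nat.prod_factorization_pow_eq_self hn
  calc (#n.divisors : ℝ) = ∏ p ∈ n.primeFactors, (n.factorization p + 1 : ℝ) := by
        rw [Nat.card_divisors hn]; push_cast; rfl
    _ ≤ ∏ p ∈ n.primeFactors,
          (if (p : ℝ) < T then B else 1) * ((p : ℝ) ^ n.factorization p) ^ ε :=
        prod_le_prod (fun _ _ => by positivity) hfactor
    _ = (∏ p ∈ n.primeFactors, if (p : ℝ) < T then B else 1) * (n : ℝ) ^ ε := by
        rw [prod_mul_distrib, hprod]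
    _ ≤ B ^ ⌈T⌉₊ * (n : ℝ) ^ ε := by gcongr

end DivisorBound

theorem Nat.sum_Ioc_gcd_le {n : ℕ} (hn : n ≠ 0) (K : ℕ) :
    ∑ c ∈ Ioc 0 K, n.gcd c ≤ #n.divisors * K := by
  have hgcd : ∀ c, n.gcd c = ∑ d ∈ n.divisors with d ∣ c, d.totient := fun c => by
    rw [← Nat.sum_totient (n.gcd c), ← Nat.divisors_filter_dvd_of_dvd hn (Nat.gcd_dvd_left n c)]
    refine sum_congr (filter_congr fun d hd => ?_) fun _ _ => rfl
    rw [Nat.dvd_gcd_iff, and_iff_right (Nat.dvd_of_mem_divisors hd)]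
  calc ∑ c ∈ Ioc 0 K, n.gcd c
      = ∑ d ∈ n.divisors, d.totient * #{c ∈ Ioc 0 K | d ∣ c} := by
        simp_rw [hgcd, sum_filter]
        rw [sum_comm]
        simp_rw [← sum_filter, sum_const, smul_eq_mul, mul_comm]
    _ = ∑ d ∈ n.divisors, d.totient * (K / d) := by simp_rw [Nat.Ioc_filter_dvd_card_eq_div]
    _ ≤ ∑ d ∈ n.divisors, K := sum_le_sum fun d _ =>
        (Nat.mul_le_mul_right _ (Nat.totient_le d)).trans (Nat.mul_div_le K d)
    _ = #n.divisors * K := by rw [sum_const, smul_eq_mul]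

theorem Nat.gcd_mul_le_mul_gcd {s N : ℕ} (hs : 0 < s) (hN : 0 < N) (c : ℕ) :
    s.gcd (N * c) ≤ N * s.gcd c := by
  refine Nat.le_of_dvd (by positivity) ?_
  rw [← Nat.gcd_mul_left]
  exact Nat.dvd_gcd ((Nat.gcd_dvd_left _ _).trans (dvd_mul_left s N)) (Nat.gcd_dvd_right _ _)

theorem sqrt_gcd_mul_le {s N : ℕ} (hs : 0 < s) (hN : 0 < N) (c : ℕ) :
    √(s.gcd (N * c)) ≤ √N * s.gcd c := calc
  √(s.gcd (N * c)) ≤ √(N * s.gcd c) := sqrt_le_sqrt (mod_cast Nat.gcd_mul_le_mul_gcd hs hN c)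
  _ = √N * √(s.gcd c) := sqrt_mul N.cast_nonneg _
  _ ≤ √N * s.gcd c := by
    gcongr
    exact sqrt_le_self_iff.mpr (.inr (Nat.one_le_cast.mpr (Nat.gcd_pos_of_pos_left c hs)))

theorem sum_sqrt_gcd_mul_sqrt_le {N s : ℕ} (hN : 0 < N) (hs : 0 < s) (M : ℕ) {X : ℝ}
    (hX : 0 ≤ X) :
    ∑ c ∈ (Icc 1 M).filter (fun c : ℕ => ((N * c : ℕ) : ℝ) ≤ X),
        √(s.gcd (N * c)) * √((N * c : ℕ))
      ≤ #s.divisors * (N : ℝ) ^ (-(1 : ℝ) / 2) * X ^ ((3 : ℝ) / 2) := by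
  have hNR : (0 : ℝ) < N := mod_cast hN
  set S := (Icc 1 M).filter (fun c : ℕ => ((N * c : ℕ) : ℝ) ≤ X)
  set K := ⌊X / N⌋₊
  have hSK : S ⊆ Ioc 0 K := fun c hc => by
    rw [mem_filter, mem_Icc] at hc
    refine mem_Ioc.mpr ⟨hc.1.1, Nat.le_floor ?_⟩
    rw [le_div_iff₀ hNR, mul_comm]
    exact_mod_cast hc.2
  have hterm : ∀ c ∈ S, √(s.gcd (N * c)) * √((N * c : ℕ)) ≤ √N * √X * s.gcd c :=
    fun c hc => calc
      √(s.gcd (N * c)) * √((N * c : ℕ)) ≤ (√N * s.gcd c) * √X :=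
        mul_le_mul (sqrt_gcd_mul_le hs hN c) (sqrt_le_sqrt (mem_filter.mp hc).2)
          (sqrt_nonneg _) (by positivity)
      _ = √N * √X * s.gcd c := by ring
  have hsum : (∑ c ∈ Ioc 0 K, s.gcd c : ℝ) ≤ #s.divisors * (X / N) := calc
    (∑ c ∈ Ioc 0 K, s.gcd c : ℝ) ≤ #s.divisors * K := mod_cast Nat.sum_Ioc_gcd_le hs.ne' K
    _ ≤ #s.divisors * (X / N) := by gcongr; exact Nat.floor_le (by positivity)
  calc _ ≤ ∑ c ∈ S, √N * √X * s.gcd c := sum_le_sum hterm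
    _ ≤ ∑ c ∈ Ioc 0 K, √N * √X * s.gcd c :=
        sum_le_sum_of_subset_of_nonneg hSK fun _ _ _ => by positivity
    _ ≤ √N * √X * (#s.divisors * (X / N)) := by rw [← mul_sum]; gcongr
    _ = #s.divisors * (N : ℝ) ^ (-(1 : ℝ) / 2) * X ^ ((3 : ℝ) / 2) := by
        rw [show (3 : ℝ) / 2 = 1 + 1 / 2 by norm_num, show -(1 : ℝ) / 2 = 1 / 2 - 1 by norm_num,
          rpow_add' hX (by norm_num), rpow_sub hNR, rpow_one, rpow_one, ← sqrt_eq_rpow,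
          ← sqrt_eq_rpow]
        ring

/-- For every `ε > 0` there is a constant `C(ε)` such that for all positive integers `N, s`
and every real `τ > 0`,
`∑_{c ≥ 1, Nc ≤ τ/s} gcd(s, Nc)^{1/2} (Nc)^{1/2} ≤ C(ε) · N^{-1/2+ε} · (τ/s)^{3/2} · s^ε`. -/
theorem sum_gcd_sqrt_le (ε : ℝ) (hε : 0 < ε) :
    ∃ C : ℝ, ∀ (N s : ℕ), 0 < N → 0 < s → ∀ τ : ℝ, 0 < τ →
      ∑ c ∈ (Finset.Icc 1 ⌊τ⌋₊).filter (fun c : ℕ => ((N * c : ℕ) : ℝ) ≤ τ / s),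
          Real.sqrt (Nat.gcd s (N * c)) * Real.sqrt ((N * c : ℕ))
        ≤ C * (N : ℝ) ^ (-(1 : ℝ) / 2 + ε) * (τ / s) ^ ((3 : ℝ) / 2) * (s : ℝ) ^ ε := by
  obtain ⟨C, hC⟩ := exists_card_divisors_le_mul_rpow hε
  have hC₁ : 1 ≤ C := by simpa using hC 1 one_ne_zero
  refine ⟨C, fun N s hN hs τ hτ => ?_⟩
  calc _ ≤ #s.divisors * (N : ℝ) ^ (-(1 : ℝ) / 2) * (τ / s) ^ ((3 : ℝ) / 2) :=
        sum_sqrt_gcd_mul_sqrt_le hN hs _ (by positivity)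
    _ ≤ C * (s : ℝ) ^ ε * (N : ℝ) ^ (-(1 : ℝ) / 2 + ε) * (τ / s) ^ ((3 : ℝ) / 2) := by
        gcongr
        · exact hC s hs.ne'
        · exact_mod_cast hN
        · linarith
    _ = C * (N : ℝ) ^ (-(1 : ℝ) / 2 + ε) * (τ / s) ^ ((3 : ℝ) / 2) * (s : ℝ) ^ ε := by ring
end

section
/- For every ε > 0 and every integer k ≥ 3 there exists a constant C(ε,k) such that for all positive integers N, s and every real number τ > 0, ∑_{c ≥ 1, Nc > τ/s} gcd(s, Nc)^{1/2} (Nc)^{3/2−k} ≤ C(ε,k) · N^{−1/2+ε} · (τ/s)^{5/2−k} · s^{ε}, where the sum ranges over all positive integers c with Nc > τ/s (this series converges since 3/2 − k ≤ −3/2). -/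
/-!
Write `β = 3/2 - k < -1` and `T = τ/s`. Since `gcd(s, Nc) ≤ N · gcd(s, c)`, the term of index `c`
is at most `√(Nd) (Nc)^β` for the divisor `d = gcd(s, c)` of `s`. For a fixed divisor `d`, the
multiples `c = dm` with `Nc > T` contribute, by the integral test, at most
`√(Nd) · β/(β+1) · T^(β+1)/(Nd) ≤ β/(β+1) · T^(β+1)/√N`. Summing over the divisors of `s` costs
the factor `d(s) = O(s^ε)`, and `N^(-1/2) ≤ N^(-1/2+ε)`.
-/

open Real Set

theorem summable_indicator_Ioi_natCast_rpow {β : ℝ} (hβ : β < -1) (M : ℝ) :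
    Summable fun m : ℕ => (Ioi M).indicator (· ^ β) (m : ℝ) :=
  (summable_nat_rpow.mpr hβ).of_nonneg_of_le
    (fun _ => indicator_apply_nonneg fun _ => by positivity)
    (fun _ => indicator_apply_le' (fun _ => le_rfl) fun _ => by positivity)

theorem tsum_indicator_Ioi_natCast_rpow_le {β M : ℝ} (hβ : β < -1) (hM : 0 < M) :
    ∑' m : ℕ, (Ioi M).indicator (· ^ β) (m : ℝ) ≤ β / (β + 1) * M ^ (β + 1) := by
  -- Integral test from `n = ⌊M⌋₊ + 1` (`⌊M⌋₊` may be `0`), with the term `n ^ β` split off.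
  set n := ⌊M⌋₊ + 1
  have hMn : M < n := by simpa [n] using Nat.lt_floor_add_one M
  have hn : (1 : ℝ) ≤ n := by simp [n]
  have hmem (m : ℕ) : (m : ℝ) ∈ Ioi M ↔ n ≤ m := by
    rw [mem_Ioi, ← Nat.floor_lt hM.le, Nat.add_one_le_iff]
  have htail : Summable fun m : ℕ => ((m + n : ℕ) : ℝ) ^ β :=
    (summable_nat_add_iff n).mpr (summable_nat_rpow.mpr hβ)
  have hshift : ∑' m : ℕ, (Ioi M).indicator (· ^ β) (m : ℝ) = ∑' m : ℕ, ((m + n : ℕ) : ℝ) ^ β := by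
    rw [← (summable_indicator_Ioi_natCast_rpow hβ M).sum_add_tsum_nat_add n,
      Finset.sum_eq_zero fun m hm => indicator_of_notMem (by simpa [hmem] using hm) _, zero_add]
    exact tsum_congr fun m => indicator_of_mem ((hmem _).mpr (by omega)) _
  have hintegral : ∑' m : ℕ, ((m + n + 1 : ℕ) : ℝ) ^ β ≤ -(n : ℝ) ^ (β + 1) / (β + 1) := by
    rw [← integral_Ioi_rpow_of_lt hβ (by positivity)]
    refine AntitoneOn.tsum_comp_add_le_integral n ?_
      (integrableOn_Ioi_rpow_of_lt hβ (by positivity)) fun t ht => ?_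
    · exact (antitoneOn_rpow_Ioi_of_exponent_nonpos (by linarith)).mono
        fun x hx => lt_of_lt_of_le (by positivity) (mem_Ici.mp hx)
    · exact rpow_nonneg (lt_trans (by positivity) ht).le _
  have hβ1 : β / (β + 1) = 1 - 1 / (β + 1) := by field_simp [show β + 1 ≠ 0 by linarith]; ring
  calc ∑' m : ℕ, (Ioi M).indicator (· ^ β) (m : ℝ)
      = (n : ℝ) ^ β + ∑' m : ℕ, ((m + n + 1 : ℕ) : ℝ) ^ β := by
        rw [hshift, htail.tsum_eq_zero_add]
        simp only [zero_add, add_right_comm _ 1 n]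
    _ ≤ (n : ℝ) ^ (β + 1) - (n : ℝ) ^ (β + 1) / (β + 1) := by
        refine add_le_add (rpow_le_rpow_of_exponent_le hn (by linarith)) ?_
        simpa [neg_div, sub_eq_add_neg] using hintegral
    _ = β / (β + 1) * (n : ℝ) ^ (β + 1) := by rw [hβ1]; ring
    _ ≤ β / (β + 1) * M ^ (β + 1) := by
        refine mul_le_mul_of_nonneg_left (rpow_le_rpow_of_nonpos hM hMn.le (by linarith)) ?_
        exact div_nonneg_of_nonpos (by linarith) (by linarith)

theorem indicator_Ioi_rpow_mul {β T u x : ℝ} (hu : 0 < u) (hx : 0 ≤ x) :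
    (Ioi T).indicator (· ^ β) (u * x) = u ^ β * (Ioi (T / u)).indicator (· ^ β) x := by
  by_cases h : T < u * x
  · rw [indicator_of_mem (mem_Ioi.mpr h),
      indicator_of_mem (mem_Ioi.mpr <| by rwa [div_lt_iff₀' hu]),
      mul_rpow hu.le hx]
  · rw [indicator_of_notMem (mt mem_Ioi.mp h),
      indicator_of_notMem (mt mem_Ioi.mp <| by rwa [div_lt_iff₀' hu]), mul_zero]

theorem summable_indicator_Ioi_mul_natCast_rpow {β : ℝ} (hβ : β < -1) (T : ℝ) {u : ℝ}
    (hu : 0 < u) : Summable fun m : ℕ => (Ioi T).indicator (· ^ β) (u * m) := by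
  simp_rw [indicator_Ioi_rpow_mul hu (Nat.cast_nonneg _)]
  exact (summable_indicator_Ioi_natCast_rpow hβ _).mul_left _

theorem tsum_indicator_Ioi_mul_natCast_rpow_le {β T u : ℝ} (hβ : β < -1) (hT : 0 < T)
    (hu : 0 < u) :
    ∑' m : ℕ, (Ioi T).indicator (· ^ β) (u * m) ≤ β / (β + 1) * T ^ (β + 1) / u := by
  simp_rw [indicator_Ioi_rpow_mul hu (Nat.cast_nonneg _)]
  rw [tsum_mul_left]
  calc u ^ β * ∑' m : ℕ, (Ioi (T / u)).indicator (· ^ β) (m : ℝ)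
      ≤ u ^ β * (β / (β + 1) * (T / u) ^ (β + 1)) :=
        mul_le_mul_of_nonneg_left (tsum_indicator_Ioi_natCast_rpow_le hβ (by positivity))
          (by positivity)
    _ = β / (β + 1) * T ^ (β + 1) / u := by
        rw [div_rpow hT.le hu.le, rpow_add_one hu.ne']
        field_simp

section Multiples

variable {α : Type*} [AddCommMonoid α] [TopologicalSpace α] {d : ℕ}

theorem summable_ite_dvd_iff (hd : d ≠ 0) {f : ℕ → α} :
    (Summable fun c => if d ∣ c then f c else 0) ↔ Summable fun m => f (d * m) := by
  rw [← (mul_right_injective₀ hd).summable_iff fun c hc => if_neg fun ⟨m, hm⟩ => hc ⟨m, hm.symm⟩]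
  simp [Function.comp_def]

theorem tsum_ite_dvd (hd : d ≠ 0) (f : ℕ → α) :
    ∑' c, (if d ∣ c then f c else 0) = ∑' m, f (d * m) := by
  rw [← (mul_right_injective₀ hd).tsum_eq fun c hc => ?_]
  · simp
  · by_contra h
    exact hc (if_neg fun ⟨m, hm⟩ => h ⟨m, hm.symm⟩)

end Multiples

theorem natCast_add_one_le_mul_two_rpow {ε : ℝ} (hε : 0 < ε) (k : ℕ) :
    (k + 1 : ℝ) ≤ (1 + (ε * log 2)⁻¹) * 2 ^ (k * ε) := by
  set c := ε * log 2
  have hc : 0 < c := mul_pos hε (log_pos one_lt_two)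
  have hexpand : (1 + c⁻¹) * (k * c + 1) = k + 1 + (k * c + c⁻¹) := by field_simp; ring
  have hrest : 0 ≤ k * c + c⁻¹ := by positivity
  calc (k + 1 : ℝ) ≤ (1 + c⁻¹) * (k * c + 1) := by rw [hexpand]; linarith
    _ ≤ (1 + c⁻¹) * exp (k * c) := by gcongr; exact add_one_le_exp _
    _ = (1 + c⁻¹) * 2 ^ (k * ε) := by rw [rpow_def_of_pos two_pos]; simp only [c]; ring_nf

theorem natCast_add_one_le_rpow_of_two_rpow_inv_le {ε p : ℝ} (hε : 0 < ε) (hp : 2 ^ ε⁻¹ ≤ p)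
    (k : ℕ) : (k + 1 : ℝ) ≤ p ^ (k * ε) :=
  calc (k + 1 : ℝ) ≤ 2 ^ k := by exact_mod_cast Nat.lt_two_pow_self
    _ = (2 ^ ε⁻¹) ^ (k * ε) := by
        rw [← rpow_mul zero_le_two, ← rpow_natCast]; congr 1; field_simp
    _ ≤ p ^ (k * ε) := by gcongr

theorem Nat.cast_rpow_eq_prod_primeFactors {n : ℕ} (hn : n ≠ 0) (ε : ℝ) :
    (n : ℝ) ^ ε = ∏ p ∈ n.primeFactors, (p : ℝ) ^ (n.factorization p * ε) := by
  conv_lhs => rw [Nat.prod_primeFactors_pow_factorization hn]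
  push_cast
  rw [← finsetProd_rpow _ _ fun p _ => by positivity]
  exact Finset.prod_congr rfl fun p _ => (rpow_natCast_mul (Nat.cast_nonneg p) _ _).symm

/-- In `d(n) = ∏ (a_p + 1)`, a prime `p ≥ 2 ^ ε⁻¹` has `a_p + 1 ≤ p ^ (a_p ε)`, and each of the
fewer than `Q` smaller primes costs at most the factor `A`. -/
theorem Nat.exists_card_divisors_le_rpow {ε : ℝ} (hε : 0 < ε) :
    ∃ C : ℝ, ∀ n : ℕ, n ≠ 0 → (n.divisors.card : ℝ) ≤ C * n ^ ε := by
  set A : ℝ := 1 + (ε * Real.log 2)⁻¹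
  set Q : ℕ := ⌈(2 : ℝ) ^ ε⁻¹⌉₊
  have hA : 1 ≤ A :=
    le_add_of_nonneg_right (inv_nonneg.mpr (mul_pos hε (Real.log_pos one_lt_two)).le)
  refine ⟨A ^ Q, fun n hn => ?_⟩
  have hfactor : ∀ p ∈ n.primeFactors, (n.factorization p + 1 : ℝ) ≤
      (if p < Q then A else 1) * (p : ℝ) ^ (n.factorization p * ε) := by
    intro p hp
    have hp2 : (2 : ℝ) ≤ p := by exact_mod_cast (Nat.prime_of_mem_primeFactors hp).two_le
    split_ifs with hpQ
    · have h2p : (2 : ℝ) ^ (n.factorization p * ε) ≤ (p : ℝ) ^ (n.factorization p * ε) := by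
        gcongr
      exact (natCast_add_one_le_mul_two_rpow hε _).trans
        (mul_le_mul_of_nonneg_left h2p (by positivity))
    · rw [one_mul]
      refine natCast_add_one_le_rpow_of_two_rpow_inv_le hε ?_ _
      exact (Nat.le_ceil _).trans (by exact_mod_cast not_lt.mp hpQ)
  calc (n.divisors.card : ℝ) = ∏ p ∈ n.primeFactors, (n.factorization p + 1 : ℝ) := by
        rw [Nat.card_divisors hn]; push_cast; rfl
    _ ≤ ∏ p ∈ n.primeFactors, (if p < Q then A else 1) * (p : ℝ) ^ (n.factorization p * ε) :=
        Finset.prod_le_prod (fun _ _ => by positivity) hfactor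
    _ = (∏ p ∈ n.primeFactors with p < Q, A) * n ^ ε := by
        rw [Finset.prod_mul_distrib, Finset.prod_filter, Nat.cast_rpow_eq_prod_primeFactors hn]
    _ ≤ A ^ Q * n ^ ε := by
        rw [Finset.prod_const]
        refine mul_le_mul_of_nonneg_right (pow_le_pow_right₀ hA ?_) (by positivity)
        refine (Finset.card_le_card fun p hp => ?_).trans_eq (Finset.card_range Q)
        exact Finset.mem_range.mpr (Finset.mem_filter.mp hp).2

theorem summable_ite_dvd_indicator_Ioi_mul_natCast_rpow {β : ℝ} (hβ : β < -1) (T : ℝ) {u : ℝ}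
    (hu : 0 < u) {d : ℕ} (hd : d ≠ 0) :
    Summable fun c : ℕ => if d ∣ c then (Ioi T).indicator (· ^ β) (u * c) else 0 := by
  rw [summable_ite_dvd_iff hd]
  simp_rw [Nat.cast_mul, ← mul_assoc]
  exact summable_indicator_Ioi_mul_natCast_rpow hβ T (by positivity)

theorem tsum_ite_dvd_indicator_Ioi_mul_natCast_rpow_le {β T u : ℝ} (hβ : β < -1) (hT : 0 < T)
    (hu : 0 < u) {d : ℕ} (hd : d ≠ 0) :
    ∑' c : ℕ, (if d ∣ c then (Ioi T).indicator (· ^ β) (u * c) else 0) ≤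
      β / (β + 1) * T ^ (β + 1) / (u * d) := by
  rw [tsum_ite_dvd hd]
  simp_rw [Nat.cast_mul, ← mul_assoc]
  exact tsum_indicator_Ioi_mul_natCast_rpow_le hβ hT (by positivity)

theorem Nat.gcd_mul_dvd_mul_gcd (s N c : ℕ) : Nat.gcd s (N * c) ∣ N * Nat.gcd s c := by
  rw [← Nat.gcd_mul_left]
  exact Nat.dvd_gcd ((Nat.gcd_dvd_left _ _).mul_left N) (Nat.gcd_dvd_right _ _)

noncomputable def gcdTailTerm (N s : ℕ) (T β : ℝ) (c : ℕ) : ℝ :=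
  if 1 ≤ c ∧ T < (N * c : ℝ) then Real.sqrt (Nat.gcd s (N * c)) * (N * c : ℝ) ^ β else 0

theorem gcdTailTerm_nonneg (N s : ℕ) (T β : ℝ) (c : ℕ) : 0 ≤ gcdTailTerm N s T β c := by
  unfold gcdTailTerm
  split_ifs <;> positivity

theorem gcdTailTerm_le_sum_divisors {N s : ℕ} (hN : 0 < N) (hs : s ≠ 0) (T β : ℝ) (c : ℕ) :
    gcdTailTerm N s T β c ≤
      ∑ d ∈ s.divisors,
        √(N * d : ℝ) * if d ∣ c then (Ioi T).indicator (· ^ β) (N * c : ℝ) else 0 := by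
  have hterm_nonneg (d : ℕ) :
      0 ≤ √(N * d : ℝ) * if d ∣ c then (Ioi T).indicator (· ^ β) (N * c : ℝ) else 0 :=
    mul_nonneg (sqrt_nonneg _) (by
      split_ifs
      exacts [indicator_apply_nonneg fun _ => by positivity, le_rfl])
  unfold gcdTailTerm
  split_ifs with h
  · have hmem : Nat.gcd s c ∈ s.divisors := Nat.mem_divisors.mpr ⟨Nat.gcd_dvd_left _ _, hs⟩
    refine le_trans ?_ (Finset.single_le_sum (fun d _ => hterm_nonneg d) hmem)
    rw [if_pos (Nat.gcd_dvd_right _ _), indicator_of_mem (mem_Ioi.mpr h.2)]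
    have hgcd : Nat.gcd s (N * c) ≤ N * Nat.gcd s c :=
      Nat.le_of_dvd (mul_pos hN (Nat.gcd_pos_of_pos_left _ (Nat.pos_of_ne_zero hs)))
        (Nat.gcd_mul_dvd_mul_gcd s N c)
    gcongr
    exact_mod_cast hgcd
  · exact Finset.sum_nonneg fun d _ => hterm_nonneg d

theorem summable_gcdTailTerm_and_tsum_le {β T : ℝ} (hβ : β < -1) (hT : 0 < T) {N s : ℕ}
    (hN : 0 < N) (hs : s ≠ 0) :
    Summable (gcdTailTerm N s T β) ∧
      ∑' c, gcdTailTerm N s T β c ≤ s.divisors.card * (β / (β + 1) * T ^ (β + 1)) / √N := by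
  set K := β / (β + 1) * T ^ (β + 1)
  have hK : 0 ≤ K := mul_nonneg (div_nonneg_of_nonpos (by linarith) (by linarith)) (by positivity)
  have hNpos : (0 : ℝ) < N := by exact_mod_cast hN
  set G : ℕ → ℕ → ℝ := fun d c =>
    √(N * d : ℝ) * if d ∣ c then (Ioi T).indicator (· ^ β) (N * c : ℝ) else 0
  have hG_summable (d : ℕ) (hd : d ∈ s.divisors) : Summable (G d) :=
    (summable_ite_dvd_indicator_Ioi_mul_natCast_rpow hβ T hNpos
      (Nat.pos_of_mem_divisors hd).ne').mul_left _
  have hG_tsum (d : ℕ) (hd : d ∈ s.divisors) : ∑' c, G d c ≤ K / √N := by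
    have hd1 : (1 : ℝ) ≤ d := by exact_mod_cast Nat.pos_of_mem_divisors hd
    rw [tsum_mul_left]
    calc √(N * d : ℝ) * ∑' c : ℕ, (if d ∣ c then (Ioi T).indicator (· ^ β) (N * c : ℝ) else 0)
        ≤ √(N * d : ℝ) * (K / (N * d)) :=
          mul_le_mul_of_nonneg_left (tsum_ite_dvd_indicator_Ioi_mul_natCast_rpow_le hβ hT hNpos
            (Nat.pos_of_mem_divisors hd).ne') (sqrt_nonneg _)
      _ = K / √(N * d : ℝ) := by rw [mul_div_left_comm, sqrt_div_self', mul_one_div]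
      _ ≤ K / √N := by gcongr; nlinarith
  have hsum : Summable fun c => ∑ d ∈ s.divisors, G d c := summable_sum hG_summable
  have hle := gcdTailTerm_le_sum_divisors hN hs T β
  have hsummable := hsum.of_nonneg_of_le (gcdTailTerm_nonneg N s T β) hle
  refine ⟨hsummable, ?_⟩
  calc ∑' c, gcdTailTerm N s T β c ≤ ∑' c, ∑ d ∈ s.divisors, G d c :=
        hsummable.tsum_le_tsum hle hsum
    _ = ∑ d ∈ s.divisors, ∑' c, G d c := Summable.tsum_finsetSum hG_summable
    _ ≤ ∑ _d ∈ s.divisors, K / √N := Finset.sum_le_sum hG_tsum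
    _ = s.divisors.card * K / √N := by rw [Finset.sum_const, nsmul_eq_mul]; ring

/-- For every `ε > 0` and every integer `k ≥ 3` there is a constant `C(ε,k)` such that
for all positive integers `N, s` and every real `τ > 0`, the convergent series
`∑_{c ≥ 1, Nc > τ/s} gcd(s, Nc)^{1/2} (Nc)^{3/2-k}` is at most
`C(ε,k) · N^{-1/2+ε} · (τ/s)^{5/2-k} · s^ε`. -/
theorem sum_gcd_rpow_tail_le (ε : ℝ) (hε : 0 < ε) (k : ℕ) (hk : 3 ≤ k) :
    ∃ C : ℝ, ∀ (N s : ℕ), 0 < N → 0 < s → ∀ τ : ℝ, 0 < τ →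
      Summable (fun c : ℕ =>
        if 1 ≤ c ∧ τ / s < (N * c : ℝ) then
          Real.sqrt (Nat.gcd s (N * c)) * (N * c : ℝ) ^ ((3 : ℝ) / 2 - k)
        else 0) ∧
      (∑' c : ℕ,
        if 1 ≤ c ∧ τ / s < (N * c : ℝ) then
          Real.sqrt (Nat.gcd s (N * c)) * (N * c : ℝ) ^ ((3 : ℝ) / 2 - k)
        else 0)
        ≤ C * (N : ℝ) ^ (-(1 : ℝ) / 2 + ε) * (τ / s) ^ ((5 : ℝ) / 2 - k) * (s : ℝ) ^ ε := by
  obtain ⟨C, hC⟩ := Nat.exists_card_divisors_le_rpow hε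
  have hβ : (3 : ℝ) / 2 - k < -1 := by
    have : (3 : ℝ) ≤ k := by exact_mod_cast hk
    linarith
  set β : ℝ := 3 / 2 - k
  refine ⟨C * (β / (β + 1)), fun N s hN hs τ hτ => ?_⟩
  obtain ⟨hsummable, hle⟩ :=
    summable_gcdTailTerm_and_tsum_le hβ (T := τ / s) (by positivity) hN hs.ne'
  refine ⟨hsummable, hle.trans ?_⟩
  have hdiv := hC s hs.ne'
  have hNrpow : 1 / √N ≤ (N : ℝ) ^ (-(1 : ℝ) / 2 + ε) := by
    rw [sqrt_eq_rpow, one_div, ← rpow_neg (Nat.cast_nonneg N)]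
    exact rpow_le_rpow_of_exponent_le (by exact_mod_cast hN) (by linarith)
  have hexponent : (5 : ℝ) / 2 - k = β + 1 := by ring
  rw [hexponent]
  calc (s.divisors.card : ℝ) * (β / (β + 1) * (τ / s) ^ (β + 1)) / √N
      = s.divisors.card * (β / (β + 1) * (τ / s) ^ (β + 1)) * (1 / √N) := by ring
    _ ≤ C * s ^ ε * (β / (β + 1) * (τ / s) ^ (β + 1)) * N ^ (-(1 : ℝ) / 2 + ε) := by
      have hK : 0 ≤ β / (β + 1) * (τ / s) ^ (β + 1) :=
        mul_nonneg (div_nonneg_of_nonpos (by linarith) (by linarith)) (by positivity)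
      have hCs : 0 ≤ C * s ^ ε := (Nat.cast_nonneg _).trans hdiv
      have := mul_nonneg hCs hK
      gcongr
    _ = _ := by ring
end

section
/- Let M = [[A,B],[C,D]] and M' = [[A',B'],[C,D']] be elements of Sp(4,ℤ) (2×2 blocks) with the same lower-left block C satisfying det C ≠ 0. Then Γ∞ M Γ∞ = Γ∞ M' Γ∞ if and only if D' − D ∈ CΛ, i.e. if and only if there exists S ∈ Λ with D' = D + CS. -/
open Matrix

/-- 2×2 integer matrices. -/
abbrev M2Z := Matrix (Fin 2) (Fin 2) ℤ

/-- 4×4 integer matrices, indexed in 2×2 blocks. -/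
abbrev M4Z := Matrix (Fin 2 ⊕ Fin 2) (Fin 2 ⊕ Fin 2) ℤ

/-- The standard symplectic form `J = [[0, 1₂], [−1₂, 0]]`. -/
def J4 : M4Z := Matrix.fromBlocks 0 1 (-1) 0

/-- `Sp(4,ℤ)`: integer matrices `M` with `ᵀM J M = J`. -/
def Sp4 : Set M4Z := {M | Mᵀ * J4 * M = J4}

/-- `u(S) = [[1₂, S], [0, 1₂]]`. -/
def uMat (S : M2Z) : M4Z := Matrix.fromBlocks 1 S 0 1

/-- `Γ∞ = {u(S) : S ∈ Λ}`, where `Λ` is the set of symmetric integer 2×2 matrices. -/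
def GammaInf : Set M4Z := {M | ∃ S : M2Z, Sᵀ = S ∧ M = uMat S}

/-- The double coset `Γ∞ M Γ∞`. -/
def doubleCoset (M : M4Z) : Set M4Z :=
  {X | ∃ γ₁ ∈ GammaInf, ∃ γ₂ ∈ GammaInf, X = γ₁ * M * γ₂}

/-!
Left multiplication by `u(S)` does not change the bottom row `(C, D)` of a matrix, and right
multiplication by `u(S)` turns it into `(C, D + CS)`; this gives one direction. Conversely, if
`D' = D + CS`, then `M u(S)` and `M'` are symplectic with the same bottom row, so
`M' (M u(S))⁻¹` is symplectic with bottom row `(0, 1)`, and such a matrix lies in `Γ∞`.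
-/

namespace Matrix

variable {l m n o p q R : Type*} [Fintype l] [Fintype m]

theorem toBlocks₂₁_mul [NonUnitalNonAssocSemiring R] (X : Matrix (n ⊕ o) (l ⊕ m) R)
    (Y : Matrix (l ⊕ m) (p ⊕ q) R) :
    (X * Y).toBlocks₂₁ = X.toBlocks₂₁ * Y.toBlocks₁₁ + X.toBlocks₂₂ * Y.toBlocks₂₁ := by
  ext i j
  simp [toBlocks₂₁, toBlocks₁₁, toBlocks₂₂, mul_apply, Fintype.sum_sum_type]

theorem toBlocks₂₂_mul [NonUnitalNonAssocSemiring R] (X : Matrix (n ⊕ o) (l ⊕ m) R)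
    (Y : Matrix (l ⊕ m) (p ⊕ q) R) :
    (X * Y).toBlocks₂₂ = X.toBlocks₂₁ * Y.toBlocks₁₂ + X.toBlocks₂₂ * Y.toBlocks₂₂ := by
  ext i j
  simp [toBlocks₂₁, toBlocks₁₂, toBlocks₂₂, mul_apply, Fintype.sum_sum_type]

end Matrix

namespace SymplecticGroup

variable {l R : Type*} [Fintype l] [DecidableEq l] [CommRing R]

theorem fromBlocks_one_mem {S : Matrix l l R} (hS : Sᵀ = S) :
    fromBlocks 1 S 0 1 ∈ symplecticGroup l R :=
  fromBlocks_mem_iff.2 ⟨by simp, by simp [hS], by simp⟩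

theorem exists_eq_fromBlocks_one_of_toBlocks₂₁_toBlocks₂₂ {N : Matrix (l ⊕ l) (l ⊕ l) R}
    (hN : N ∈ symplecticGroup l R) (h₂₁ : N.toBlocks₂₁ = 0) (h₂₂ : N.toBlocks₂₂ = 1) :
    ∃ S : Matrix l l R, Sᵀ = S ∧ N = fromBlocks 1 S 0 1 := by
  rw [← fromBlocks_toBlocks N, h₂₁, h₂₂] at hN ⊢
  obtain ⟨-, hB, hA⟩ := fromBlocks_mem_iff.1 hN
  have hA : N.toBlocks₁₁ = 1 := by simpa using congr(transpose $hA)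
  exact ⟨_, by simpa using hB, by rw [hA]⟩

theorem exists_fromBlocks_one_mul_eq {M M' : Matrix (l ⊕ l) (l ⊕ l) R}
    (hM : M ∈ symplecticGroup l R) (hM' : M' ∈ symplecticGroup l R)
    (h₂₁ : M'.toBlocks₂₁ = M.toBlocks₂₁) (h₂₂ : M'.toBlocks₂₂ = M.toBlocks₂₂) :
    ∃ S : Matrix l l R, Sᵀ = S ∧ M' = fromBlocks 1 S 0 1 * M := by
  have hMinv : M⁻¹ ∈ symplecticGroup l R :=
    coe_inv' ⟨M, hM⟩ ▸ (⟨M, hM⟩ : symplecticGroup l R)⁻¹.2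
  have hunit : M * M⁻¹ = 1 := mul_nonsing_inv M (symplectic_det hM)
  obtain ⟨S, hS, hN⟩ := exists_eq_fromBlocks_one_of_toBlocks₂₁_toBlocks₂₂ (mul_mem hM' hMinv)
    (by rw [toBlocks₂₁_mul, h₂₁, h₂₂, ← toBlocks₂₁_mul, hunit, ← fromBlocks_one,
      toBlocks_fromBlocks₂₁])
    (by rw [toBlocks₂₂_mul, h₂₁, h₂₂, ← toBlocks₂₂_mul, hunit, ← fromBlocks_one,
      toBlocks_fromBlocks₂₂])
  refine ⟨S, hS, ?_⟩
  rw [← hN, Matrix.mul_assoc, nonsing_inv_mul M (symplectic_det hM), Matrix.mul_one]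

end SymplecticGroup

theorem mem_Sp4_iff {M : M4Z} : M ∈ Sp4 ↔ M ∈ symplecticGroup (Fin 2) ℤ := by
  have hJ : J4 = -J (Fin 2) ℤ := by simp [J4, J, fromBlocks_neg]
  rw [SymplecticGroup.mem_iff', Sp4, Set.mem_ofPred_eq, hJ, Matrix.mul_neg, Matrix.neg_mul,
    neg_inj]

theorem uMat_mul (S T : M2Z) : uMat S * uMat T = uMat (S + T) := by
  simp [uMat, fromBlocks_multiply, add_comm]

theorem uMat_zero : uMat 0 = 1 := by
  simp [uMat, ← fromBlocks_one]

theorem uMat_neg_mul (S : M2Z) : uMat (-S) * uMat S = 1 := by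
  rw [uMat_mul, neg_add_cancel, uMat_zero]

theorem uMat_mul_neg (S : M2Z) : uMat S * uMat (-S) = 1 := by
  rw [uMat_mul, add_neg_cancel, uMat_zero]

theorem toBlocks₂₁_uMat_mul (S : M2Z) (X : M4Z) : (uMat S * X).toBlocks₂₁ = X.toBlocks₂₁ := by
  simp [uMat, toBlocks₂₁_mul]

theorem toBlocks₂₂_uMat_mul (S : M2Z) (X : M4Z) : (uMat S * X).toBlocks₂₂ = X.toBlocks₂₂ := by
  simp [uMat, toBlocks₂₂_mul]

theorem toBlocks₂₁_mul_uMat (X : M4Z) (S : M2Z) : (X * uMat S).toBlocks₂₁ = X.toBlocks₂₁ := by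
  simp [uMat, toBlocks₂₁_mul]

theorem toBlocks₂₂_mul_uMat (X : M4Z) (S : M2Z) :
    (X * uMat S).toBlocks₂₂ = X.toBlocks₂₂ + X.toBlocks₂₁ * S := by
  simp [uMat, toBlocks₂₂_mul, add_comm]

theorem uMat_mem_GammaInf {S : M2Z} (hS : Sᵀ = S) : uMat S ∈ GammaInf := ⟨S, hS, rfl⟩

theorem one_mem_GammaInf : (1 : M4Z) ∈ GammaInf := uMat_zero ▸ uMat_mem_GammaInf (by simp)

theorem mul_mem_GammaInf {γ δ : M4Z} (hγ : γ ∈ GammaInf) (hδ : δ ∈ GammaInf) :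
    γ * δ ∈ GammaInf := by
  obtain ⟨S, hS, rfl⟩ := hγ
  obtain ⟨T, hT, rfl⟩ := hδ
  exact uMat_mul S T ▸ uMat_mem_GammaInf (by rw [transpose_add, hS, hT])

theorem mem_doubleCoset_self (M : M4Z) : M ∈ doubleCoset M :=
  ⟨1, one_mem_GammaInf, 1, one_mem_GammaInf, by simp⟩

theorem mem_doubleCoset_symm {M M' : M4Z} (h : M' ∈ doubleCoset M) : M ∈ doubleCoset M' := by
  obtain ⟨_, ⟨S, hS, rfl⟩, _, ⟨T, hT, rfl⟩, rfl⟩ := h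
  refine ⟨uMat (-S), uMat_mem_GammaInf (by simp [hS]), uMat (-T),
    uMat_mem_GammaInf (by simp [hT]), ?_⟩
  calc M = uMat (-S) * uMat S * M * (uMat T * uMat (-T)) := by
        rw [uMat_neg_mul, uMat_mul_neg, Matrix.one_mul, Matrix.mul_one]
    _ = uMat (-S) * (uMat S * M * uMat T) * uMat (-T) := by noncomm_ring

theorem doubleCoset_subset_of_mem {M M' : M4Z} (h : M' ∈ doubleCoset M) :
    doubleCoset M' ⊆ doubleCoset M := by
  obtain ⟨γ₁, hγ₁, γ₂, hγ₂, rfl⟩ := h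
  rintro _ ⟨δ₁, hδ₁, δ₂, hδ₂, rfl⟩
  exact ⟨δ₁ * γ₁, mul_mem_GammaInf hδ₁ hγ₁, γ₂ * δ₂, mul_mem_GammaInf hγ₂ hδ₂, by noncomm_ring⟩

theorem doubleCoset_eq_iff_mem {M M' : M4Z} :
    doubleCoset M = doubleCoset M' ↔ M' ∈ doubleCoset M :=
  ⟨fun h ↦ h ▸ mem_doubleCoset_self M', fun h ↦
    (doubleCoset_subset_of_mem (mem_doubleCoset_symm h)).antisymm (doubleCoset_subset_of_mem h)⟩

theorem double_coset_eq_iff_general (M M' : M4Z) (hM : M ∈ Sp4) (hM' : M' ∈ Sp4)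
    (hCeq : M'.toBlocks₂₁ = M.toBlocks₂₁) :
    doubleCoset M = doubleCoset M' ↔
      ∃ S : M2Z, Sᵀ = S ∧ M'.toBlocks₂₂ = M.toBlocks₂₂ + M.toBlocks₂₁ * S := by
  rw [doubleCoset_eq_iff_mem]
  constructor
  · rintro ⟨_, ⟨S₁, -, rfl⟩, _, ⟨S₂, hS₂, rfl⟩, rfl⟩
    exact ⟨S₂, hS₂, by rw [toBlocks₂₂_mul_uMat, toBlocks₂₁_uMat_mul, toBlocks₂₂_uMat_mul]⟩
  · rintro ⟨S, hS, hD⟩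
    obtain ⟨T, hT, hM'_eq⟩ := SymplecticGroup.exists_fromBlocks_one_mul_eq
      (mul_mem (mem_Sp4_iff.1 hM) (SymplecticGroup.fromBlocks_one_mem hS)) (mem_Sp4_iff.1 hM')
      (by rw [hCeq, ← uMat, toBlocks₂₁_mul_uMat]) (by rw [hD, ← uMat, toBlocks₂₂_mul_uMat])
    exact ⟨uMat T, uMat_mem_GammaInf hT, uMat S, uMat_mem_GammaInf hS,
      by rw [hM'_eq, ← Matrix.mul_assoc]; rfl⟩

/-- For `M = [[A,B],[C,D]]` and `M' = [[A',B'],[C,D']]` in `Sp(4,ℤ)` with the same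
lower-left block `C` of nonzero determinant, `Γ∞ M Γ∞ = Γ∞ M' Γ∞` iff `D' − D ∈ CΛ`,
i.e. iff `D' = D + CS` for some symmetric integer `S`. -/
theorem double_coset_eq_iff (M M' : M4Z) (hM : M ∈ Sp4) (hM' : M' ∈ Sp4)
    (hCeq : M'.toBlocks₂₁ = M.toBlocks₂₁) (hC : (M.toBlocks₂₁).det ≠ 0) :
    doubleCoset M = doubleCoset M' ↔
      ∃ S : M2Z, Sᵀ = S ∧ M'.toBlocks₂₂ = M.toBlocks₂₂ + M.toBlocks₂₁ * S :=
  double_coset_eq_iff_general M M' hM hM' hCeq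
end
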